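/- If f : G → H is a group homomorphism, then the map f̂ : L(G) → L(H) defined by f̂(∑ aᵢ ĝᵢ) = ∑ aᵢ (f(gᵢ) − f(gᵢ)⁻¹) is a well-defined Lie algebra homomorphism between the Plesken Lie algebras, and it equals the restriction of f̄ : FG → FH to L(G). -/

import Mathlib

/-- The Plesken Lie algebra `L(G)` of a group `G` over `F`, as the `F`-linear span of the
elements `ĝ = g - g⁻¹` inside the group algebra `FG`. -/
noncomputable def pleskenSpan (F G : Type*) [Field F] [Group G] :
    Submodule F (MonoidAlgebra F G) :=
  Submodule.span F
    {x | ∃ g : G, x = MonoidAlgebra.of F G g - MonoidAlgebra.of F G g⁻¹}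

/-- The linear extension `f̄ : FG → FH` of a group homomorphism `f : G → H`. -/
noncomputable def groupAlgebraMap (F : Type*) {G H : Type*} [Field F] [Group G] [Group H]
    (f : G →* H) : MonoidAlgebra F G → MonoidAlgebra F H :=
  MonoidAlgebra.mapDomain (⇑f)

/-!
`f̄` is the algebra homomorphism `MonoidAlgebra.mapDomainAlgHom`, so it is linear and
preserves commutators on all of `FG`. It sends each generator `ĝ` of `L(G)` to the generator
`f(g) - f(g)⁻¹` of `L(H)`, hence maps the span `L(G)` into `L(H)`.
-/

section GroupAlgebraMap

variable {F G H : Type*} [Field F] [Group G] [Group H] (f : G →* H)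

theorem groupAlgebraMap_eq_mapDomainAlgHom :
    groupAlgebraMap F f = ⇑(MonoidAlgebra.mapDomainAlgHom F F f) :=
  rfl

theorem groupAlgebraMap_of_sub_of_inv (g : G) :
    groupAlgebraMap F f (MonoidAlgebra.of F G g - MonoidAlgebra.of F G g⁻¹)
      = MonoidAlgebra.of F H (f g) - MonoidAlgebra.of F H (f g)⁻¹ := by
  rw [groupAlgebraMap_eq_mapDomainAlgHom, map_sub]
  simp

theorem groupAlgebraMap_lie (x y : MonoidAlgebra F G) :
    groupAlgebraMap F f ⁅x, y⁆ = ⁅groupAlgebraMap F f x, groupAlgebraMap F f y⁆ := by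
  simp only [groupAlgebraMap_eq_mapDomainAlgHom, Ring.lie_def, map_sub, map_mul]

theorem groupAlgebraMap_mem_pleskenSpan {x : MonoidAlgebra F G} (hx : x ∈ pleskenSpan F G) :
    groupAlgebraMap F f x ∈ pleskenSpan F H := by
  suffices pleskenSpan F G ≤
      (pleskenSpan F H).comap (MonoidAlgebra.mapDomainAlgHom F F f).toLinearMap from this hx
  refine Submodule.span_le.mpr ?_
  rintro _ ⟨g, rfl⟩
  exact Submodule.subset_span ⟨f g, groupAlgebraMap_of_sub_of_inv f g⟩

end GroupAlgebraMap

theorem plesken_map_is_lieHom_general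
    (F G H : Type*) [Field F] [Group G] [Group H]
    (f : G →* H) :
    (∀ x ∈ pleskenSpan F G, groupAlgebraMap F f x ∈ pleskenSpan F H) ∧
    (∀ g : G,
        groupAlgebraMap F f (MonoidAlgebra.of F G g - MonoidAlgebra.of F G g⁻¹)
          = MonoidAlgebra.of F H (f g) - MonoidAlgebra.of F H (f g)⁻¹) ∧
    (∀ x ∈ pleskenSpan F G, ∀ y ∈ pleskenSpan F G,
        groupAlgebraMap F f ⁅x, y⁆ = ⁅groupAlgebraMap F f x, groupAlgebraMap F f y⁆) ∧
    (∀ x y : MonoidAlgebra F G,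
        groupAlgebraMap F f (x + y) = groupAlgebraMap F f x + groupAlgebraMap F f y) ∧
    (∀ (c : F) (x : MonoidAlgebra F G),
        groupAlgebraMap F f (c • x) = c • groupAlgebraMap F f x) := by
  refine ⟨fun x hx => groupAlgebraMap_mem_pleskenSpan f hx, groupAlgebraMap_of_sub_of_inv f,
    fun x _ y _ => groupAlgebraMap_lie f x y, ?_, ?_⟩
  · exact map_add (MonoidAlgebra.mapDomainAlgHom F F f)
  · exact map_smul (MonoidAlgebra.mapDomainAlgHom F F f)

/-- If `f : G → H` is a group homomorphism, then `f̂ : L(G) → L(H)`, the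
restriction of the linear extension `f̄ : FG → FH` to the Plesken Lie algebra, is
well-defined (it maps `L(G)` into `L(H)`), sends each generator `ĝ = g - g⁻¹` to
`f(g) - f(g)⁻¹`, and is a Lie algebra homomorphism (linear and bracket-preserving). -/
theorem plesken_map_is_lieHom
    (F G H : Type*) [Field F] [Group G] [Group H] [Finite G] [Finite H]
    (f : G →* H) :
    (∀ x ∈ pleskenSpan F G, groupAlgebraMap F f x ∈ pleskenSpan F H) ∧
    (∀ g : G,
        groupAlgebraMap F f (MonoidAlgebra.of F G g - MonoidAlgebra.of F G g⁻¹)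
          = MonoidAlgebra.of F H (f g) - MonoidAlgebra.of F H (f g)⁻¹) ∧
    (∀ x ∈ pleskenSpan F G, ∀ y ∈ pleskenSpan F G,
        groupAlgebraMap F f ⁅x, y⁆ = ⁅groupAlgebraMap F f x, groupAlgebraMap F f y⁆) ∧
    (∀ x y : MonoidAlgebra F G,
        groupAlgebraMap F f (x + y) = groupAlgebraMap F f x + groupAlgebraMap F f y) ∧
    (∀ (c : F) (x : MonoidAlgebra F G),
        groupAlgebraMap F f (c • x) = c • groupAlgebraMap F f x) :=
  plesken_map_is_lieHom_general F G H f
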